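/- Let H be a Banach space, T > 0, A > 0, and (U(t,s))_{t ≥ s} an evolution family on H with ‖U(t,s)‖ ≤ C₀·e^{A(t-s)}, the composition law U(t,r)U(r,s) = U(t,s) for s ≤ r ≤ t, and the periodicity U(t+T, s+T) = U(t,s). Suppose there are operators χ₁, χ₂, ψ₁, ψ₂ ∈ ℒ(H) such that χ₁U(t, kT) = χ₁U(t,kT)χ₂ and ψ₂U((l+1)T, s) = U((l+1)T,s)ψ₁ hold whenever 0 ≤ t - kT ≤ T and 0 ≤ (l+1)T - s ≤ T (finite propagation compressions), and such that ‖χ₂ U(mT, 0) ψ₂‖ ≤ C₁/((mT+1)·ln²(mT+e)) for all integers m ≥ m₀. Then there is C₂ > 0 such that for all t ≥ s with t - s ≥ (m₀+2)T: ‖χ₁ U(t,s) ψ₁‖ ≤ C₂/((t-s+1)·ln²(t-s+e)). -/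

import Mathlib

open Real

/-!
Cut `[s, t]` at the period grid: with `a` the first multiple of `T` after `s` and `b` the last one
before `t`, the composition law splits `U(t,s)` as `U(t,b) U(b,a) U(a,s)`, and the finite-propagation
compressions let `χ₂, ψ₂` be inserted around the middle factor. Periodicity identifies that factor
with `U(mT, 0)`, where `mT = b - a ≥ t - s - 2T`. The two outer factors live on windows of length at
most `T`, so they are bounded by `C₀ e^{AT}`, and the weight `(x + 1) ln²(x + e)` changes by at most a
constant factor when its argument moves by `2T`.
-/

noncomputable def logWeight (x : ℝ) : ℝ := (x + 1) * log (x + exp 1) ^ 2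

lemma one_le_log_add_exp_one {x : ℝ} (hx : 0 ≤ x) : 1 ≤ log (x + exp 1) := by
  rw [le_log_iff_exp_le (by positivity)]
  linarith

lemma logWeight_pos {x : ℝ} (hx : 0 ≤ x) : 0 < logWeight x := by
  have := one_le_log_add_exp_one hx
  unfold logWeight
  positivity

lemma log_add_exp_one_le_of_le_add {x y a : ℝ} (hx : 0 ≤ x) (hy : 0 ≤ y) (ha : 0 ≤ a)
    (hxy : x ≤ y + a) : log (x + exp 1) ≤ (1 + log (a + 1)) * log (y + exp 1) := by
  have hlog_a : 0 ≤ log (a + 1) := log_nonneg (by linarith)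
  have hlog_y := one_le_log_add_exp_one hy
  have hexp : 1 ≤ exp 1 := one_le_exp zero_le_one
  have hprod : x + exp 1 ≤ (a + 1) * (y + exp 1) := by nlinarith
  calc log (x + exp 1) ≤ log ((a + 1) * (y + exp 1)) := log_le_log (by positivity) hprod
    _ = log (a + 1) + log (y + exp 1) := log_mul (by positivity) (by positivity)
    _ ≤ (1 + log (a + 1)) * log (y + exp 1) := by nlinarith

lemma logWeight_le_mul_of_le_add {x y a : ℝ} (hx : 0 ≤ x) (hy : 0 ≤ y) (ha : 0 ≤ a)
    (hxy : x ≤ y + a) : logWeight x ≤ (a + 1) * (1 + log (a + 1)) ^ 2 * logWeight y := by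
  have hlin : x + 1 ≤ (a + 1) * (y + 1) := by nlinarith
  have hlog := log_add_exp_one_le_of_le_add hx hy ha hxy
  have hlog_x := one_le_log_add_exp_one hx
  calc logWeight x ≤ ((a + 1) * (y + 1)) * ((1 + log (a + 1)) * log (y + exp 1)) ^ 2 := by
        unfold logWeight
        gcongr
    _ = (a + 1) * (1 + log (a + 1)) ^ 2 * logWeight y := by unfold logWeight; ring

lemma div_logWeight_le_of_le_add {x y a C : ℝ} (hx : 0 ≤ x) (hy : 0 ≤ y) (ha : 0 ≤ a)
    (hxy : x ≤ y + a) (hC : 0 ≤ C) :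
    C / logWeight y ≤ (a + 1) * (1 + log (a + 1)) ^ 2 * C / logWeight x := by
  rw [div_le_div_iff₀ (logWeight_pos hy) (logWeight_pos hx)]
  calc C * logWeight x ≤ C * ((a + 1) * (1 + log (a + 1)) ^ 2 * logWeight y) :=
        mul_le_mul_of_nonneg_left (logWeight_le_mul_of_le_add hx hy ha hxy) hC
    _ = (a + 1) * (1 + log (a + 1)) ^ 2 * C * logWeight y := by ring

lemma exists_int_nat_period_grid {T s t : ℝ} (hT : 0 < T) (hst : s + T ≤ t) :
    ∃ (l : ℤ) (m : ℕ), s ≤ (l + 1) * T ∧ (l + 1) * T ≤ s + T ∧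
      (l + 1 + m) * T ≤ t ∧ t ≤ (l + 1 + m) * T + T := by
  set l := ⌊s / T⌋
  have hl_le : (l : ℝ) * T ≤ s := (le_div_iff₀ hT).mp (Int.floor_le _)
  have hl_lt : s < (l + 1) * T := (div_lt_iff₀ hT).mp (Int.lt_floor_add_one _)
  have hrest : 0 ≤ (t - (l + 1) * T) / T := div_nonneg (by linarith) hT.le
  set m := ⌊(t - (l + 1) * T) / T⌋₊
  have hm_le : (m : ℝ) * T ≤ t - (l + 1) * T := (le_div_iff₀ hT).mp (Nat.floor_le hrest)
  have hm_lt : t - (l + 1) * T < (m + 1) * T := (div_lt_iff₀ hT).mp (Nat.lt_floor_add_one _)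
  exact ⟨l, m, hl_lt.le, by linarith, by linarith, by linarith⟩

lemma apply_add_int_mul_of_diag_periodic {α : Type*} {U : ℝ → ℝ → α} {T : ℝ}
    (hper : ∀ t s, U (t + T) (s + T) = U t s) (n : ℤ) (t s : ℝ) :
    U (t + n * T) (s + n * T) = U t s := by
  have hP : Function.Periodic (fun r => U (t + r) (s + r)) T := fun r => by
    simpa only [add_assoc] using hper (t + r) (s + r)
  simpa using hP.int_mul n 0

lemma norm_le_mul_exp_of_le_add {E : Type*} [SeminormedAddCommGroup E] {U : ℝ → ℝ → E}
    {A C₀ T s t : ℝ} (hbound : ∀ t s, s ≤ t → ‖U t s‖ ≤ C₀ * exp (A * (t - s)))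
    (hA : 0 ≤ A) (hC₀ : 0 ≤ C₀) (hst : s ≤ t) (htT : t ≤ s + T) :
    ‖U t s‖ ≤ C₀ * exp (A * T) :=
  (hbound t s hst).trans <| by gcongr; linarith

lemma compression_mul_eq {M : Type*} [Monoid M] {χ₁ χ₂ ψ₁ ψ₂ x y z : M}
    (hχ : χ₁ * x = χ₁ * x * χ₂) (hψ : ψ₂ * z = z * ψ₁) :
    χ₁ * (x * y * z) * ψ₁ = χ₁ * x * (χ₂ * y * ψ₂) * z := by
  calc χ₁ * (x * y * z) * ψ₁ = χ₁ * x * (y * (z * ψ₁)) := by simp only [mul_assoc]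
    _ = χ₁ * x * χ₂ * (y * (ψ₂ * z)) := by rw [← hχ, hψ]
    _ = χ₁ * x * (χ₂ * y * ψ₂) * z := by simp only [mul_assoc]

section PeriodicEvolution

variable {R : Type*} [SeminormedRing R] {U : ℝ → ℝ → R} {χ₁ χ₂ ψ₁ ψ₂ : R} {T A C₀ : ℝ}

lemma exists_nat_norm_sandwich_le (hT : 0 < T) (hA : 0 ≤ A) (hC₀ : 0 ≤ C₀)
    (hbound : ∀ t s : ℝ, s ≤ t → ‖U t s‖ ≤ C₀ * exp (A * (t - s)))
    (hcomp : ∀ s r t : ℝ, s ≤ r → r ≤ t → U t r * U r s = U t s)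
    (hper : ∀ t s : ℝ, U (t + T) (s + T) = U t s)
    (hχ : ∀ (t : ℝ) (k : ℤ), 0 ≤ t - (k : ℝ) * T → t - (k : ℝ) * T ≤ T →
      χ₁ * U t ((k : ℝ) * T) = χ₁ * U t ((k : ℝ) * T) * χ₂)
    (hψ : ∀ (s : ℝ) (l : ℤ), 0 ≤ ((l : ℝ) + 1) * T - s → ((l : ℝ) + 1) * T - s ≤ T →
      ψ₂ * U (((l : ℝ) + 1) * T) s = U (((l : ℝ) + 1) * T) s * ψ₁)
    {s t : ℝ} (hst : s + T ≤ t) :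
    ∃ m : ℕ, t - s ≤ m * T + 2 * T ∧ t - s - 2 * T ≤ m * T ∧
      ‖χ₁ * U t s * ψ₁‖
        ≤ ‖χ₁‖ * (C₀ * exp (A * T)) * ‖χ₂ * U (m * T) 0 * ψ₂‖ * (C₀ * exp (A * T)) := by
  obtain ⟨l, m, hsa, has, hbt, htb⟩ := exists_int_nat_period_grid hT hst
  obtain ⟨k, hk⟩ : ∃ k : ℤ, (k : ℝ) = l + 1 + m := ⟨l + 1 + m, by push_cast; rfl⟩
  rw [← hk] at hbt htb
  have hkT : k * T = (l + 1) * T + m * T := by rw [hk]; ring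
  have hmT : 0 ≤ (m : ℝ) * T := by positivity
  have hmid : U (k * T) ((l + 1) * T) = U (m * T) 0 := by
    have := apply_add_int_mul_of_diag_periodic hper (l + 1) (m * T) 0
    push_cast at this
    rw [← this, hk]
    congr 1 <;> ring
  have hfactor : χ₁ * U t s * ψ₁
      = χ₁ * U t (k * T) * (χ₂ * U (m * T) 0 * ψ₂) * U ((l + 1) * T) s := by
    rw [← hmid, ← compression_mul_eq (hχ t k (by linarith) (by linarith))
      (hψ s l (by linarith) (by linarith)), hcomp _ _ _ (by linarith) hbt,
      hcomp _ _ _ hsa (by linarith)]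
  refine ⟨m, by linarith, by linarith, ?_⟩
  calc ‖χ₁ * U t s * ψ₁‖
      ≤ ‖χ₁ * U t (k * T)‖ * ‖χ₂ * U (m * T) 0 * ψ₂‖ * ‖U ((l + 1) * T) s‖ :=
        hfactor ▸ norm_mul₃_le
    _ ≤ ‖χ₁‖ * ‖U t (k * T)‖ * ‖χ₂ * U (m * T) 0 * ψ₂‖ * ‖U ((l + 1) * T) s‖ := by
        gcongr
        exact norm_mul_le _ _
    _ ≤ _ := by
        gcongr
        · exact norm_le_mul_exp_of_le_add hbound hA hC₀ hbt (by linarith)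
        · exact norm_le_mul_exp_of_le_add hbound hA hC₀ hsa has

end PeriodicEvolution

theorem local_energy_decay_from_period_decay_general
    {H : Type*} [NormedAddCommGroup H] [NormedSpace ℂ H]
    (T A C₀ C₁ : ℝ) (hT : 0 < T) (hA : 0 < A) (hC₀ : 0 < C₀) (hC₁ : 0 < C₁)
    (m₀ : ℕ) (U : ℝ → ℝ → (H →L[ℂ] H)) (χ₁ χ₂ ψ₁ ψ₂ : H →L[ℂ] H)
    (hbound : ∀ t s : ℝ, s ≤ t → ‖U t s‖ ≤ C₀ * Real.exp (A * (t - s)))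
    (hcomp : ∀ s r t : ℝ, s ≤ r → r ≤ t → U t r * U r s = U t s)
    (hper : ∀ t s : ℝ, U (t + T) (s + T) = U t s)
    (hχ : ∀ (t : ℝ) (k : ℤ), 0 ≤ t - (k : ℝ) * T → t - (k : ℝ) * T ≤ T →
      χ₁ * U t ((k : ℝ) * T) = χ₁ * U t ((k : ℝ) * T) * χ₂)
    (hψ : ∀ (s : ℝ) (l : ℤ), 0 ≤ ((l : ℝ) + 1) * T - s → ((l : ℝ) + 1) * T - s ≤ T →
      ψ₂ * U (((l : ℝ) + 1) * T) s = U (((l : ℝ) + 1) * T) s * ψ₁)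
    (hdecay : ∀ m : ℕ, m₀ ≤ m →
      ‖χ₂ * U ((m : ℝ) * T) 0 * ψ₂‖
        ≤ C₁ / (((m : ℝ) * T + 1) * (Real.log ((m : ℝ) * T + Real.exp 1)) ^ 2)) :
    ∃ C₂ : ℝ, 0 < C₂ ∧ ∀ t s : ℝ, s ≤ t → ((m₀ : ℝ) + 2) * T ≤ t - s →
      ‖χ₁ * U t s * ψ₁‖ ≤ C₂ / ((t - s + 1) * (Real.log (t - s + Real.exp 1)) ^ 2) := by
  set M := C₀ * exp (A * T)
  set c := (2 * T + 1) * (1 + log (2 * T + 1)) ^ 2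
  have hM : 0 < M := by positivity
  have hc : 0 < c := by have := log_nonneg (by linarith : (1 : ℝ) ≤ 2 * T + 1); positivity
  refine ⟨(‖χ₁‖ + 1) * M * (c * C₁) * M, by positivity, fun t s _ hts => ?_⟩
  have hm₀T : 0 ≤ (m₀ : ℝ) * T := by positivity
  obtain ⟨m, hm_upper, hm_lower, hnorm⟩ := exists_nat_norm_sandwich_le hT hA.le hC₀.le
    hbound hcomp hper hχ hψ (by linarith : s + T ≤ t)
  have hm₀ : m₀ ≤ m := by
    exact_mod_cast le_of_mul_le_mul_right (by linarith : (m₀ : ℝ) * T ≤ m * T) hT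
  have hmiddle : ‖χ₂ * U (m * T) 0 * ψ₂‖ ≤ c * C₁ / logWeight (t - s) :=
    (hdecay m hm₀).trans <| div_logWeight_le_of_le_add (by linarith) (by positivity)
      (by positivity) hm_upper hC₁.le
  have := logWeight_pos (x := t - s) (by linarith)
  calc ‖χ₁ * U t s * ψ₁‖ ≤ ‖χ₁‖ * M * ‖χ₂ * U (m * T) 0 * ψ₂‖ * M := hnorm
    _ ≤ (‖χ₁‖ + 1) * M * (c * C₁ / logWeight (t - s)) * M := by gcongr; linarith
    _ = _ := by unfold logWeight; ring

/-- Final step of Theorem 1: decay of `‖χ₂ U(mT,0) ψ₂‖` along multiples of the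
period, together with the evolution-family structure and finite-propagation
compressions, yields the full local energy decay
`‖χ₁ U(t,s) ψ₁‖ ≤ C₂/((t-s+1)·ln²(t-s+e))` for `t - s ≥ (m₀+2)T`. -/
theorem local_energy_decay_from_period_decay
    {H : Type*} [NormedAddCommGroup H] [NormedSpace ℂ H] [CompleteSpace H]
    (T A C₀ C₁ : ℝ) (hT : 0 < T) (hA : 0 < A) (hC₀ : 0 < C₀) (hC₁ : 0 < C₁)
    (m₀ : ℕ) (U : ℝ → ℝ → (H →L[ℂ] H)) (χ₁ χ₂ ψ₁ ψ₂ : H →L[ℂ] H)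
    (hbound : ∀ t s : ℝ, s ≤ t → ‖U t s‖ ≤ C₀ * Real.exp (A * (t - s)))
    (hcomp : ∀ s r t : ℝ, s ≤ r → r ≤ t → U t r * U r s = U t s)
    (hper : ∀ t s : ℝ, U (t + T) (s + T) = U t s)
    (hχ : ∀ (t : ℝ) (k : ℤ), 0 ≤ t - (k : ℝ) * T → t - (k : ℝ) * T ≤ T →
      χ₁ * U t ((k : ℝ) * T) = χ₁ * U t ((k : ℝ) * T) * χ₂)
    (hψ : ∀ (s : ℝ) (l : ℤ), 0 ≤ ((l : ℝ) + 1) * T - s → ((l : ℝ) + 1) * T - s ≤ T →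
      ψ₂ * U (((l : ℝ) + 1) * T) s = U (((l : ℝ) + 1) * T) s * ψ₁)
    (hdecay : ∀ m : ℕ, m₀ ≤ m →
      ‖χ₂ * U ((m : ℝ) * T) 0 * ψ₂‖
        ≤ C₁ / (((m : ℝ) * T + 1) * (Real.log ((m : ℝ) * T + Real.exp 1)) ^ 2)) :
    ∃ C₂ : ℝ, 0 < C₂ ∧ ∀ t s : ℝ, s ≤ t → ((m₀ : ℝ) + 2) * T ≤ t - s →
      ‖χ₁ * U t s * ψ₁‖ ≤ C₂ / ((t - s + 1) * (Real.log (t - s + Real.exp 1)) ^ 2) :=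
  local_energy_decay_from_period_decay_general T A C₀ C₁ hT hA hC₀ hC₁ m₀ U χ₁ χ₂ ψ₁ ψ₂ hbound hcomp
    hper hχ hψ hdecay
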